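/- arXiv:2106.13283 — 5 statements merged into one kernel-verified Lean document; each statement's English description precedes it below -/
import Mathlib

section
/- (Theorem on single-step maximization.) Assume 1 ≥ b_1 ≥ b_2 ≥ … ≥ b_m ≥ 0. Then for every supermodular function f : 𝓛 → ℝ and every x ∈ M_1(b), one has E_x(f) ≤ E_{q*}(f); consequently the maximum of E_x(f) over x ∈ M_1(b) equals E_{q*}(f). -/
noncomputable section

open Finset

/-- `ℓ_i` : indicator of `i ∈ S`. -/
def ell {m : ℕ} (i : Fin m) (S : Finset (Fin m)) : ℝ := if i ∈ S then 1 else 0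

/-- `μ_j = {1,…,j}` (the first `j` elements of `Fin m`). -/
def mu (m j : ℕ) : Finset (Fin m) := Finset.univ.filter fun i => (i : ℕ) < j

/-- paper `b_j` for `j = 0,…,m`, with `b_0 = 1` (and `0` beyond `m`). -/
def bpaper {m : ℕ} (b : Fin m → ℝ) (j : ℕ) : ℝ :=
  if j = 0 then 1 else if h : j - 1 < m then b ⟨j - 1, h⟩ else 0

/-- the upper supermodular vertex measure `q*`:
`q*(μ_j) = b_j − b_{j+1}` for `0 ≤ j ≤ m−1`, `q*(μ_m) = b_m`, and `q* = 0` elsewhere. -/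
def qStar {m : ℕ} (b : Fin m → ℝ) (S : Finset (Fin m)) : ℝ :=
  ∑ j ∈ Finset.range (m + 1), if S = mu m j then bpaper b j - bpaper b (j + 1) else 0

/-- the lower supermodular vertex measure `q_*`:
`q_*(∅) = 1 − Σᵢ bᵢ`, `q_*({i}) = bᵢ`, and `q_* = 0` elsewhere. -/
def qLow {m : ℕ} (b : Fin m → ℝ) (S : Finset (Fin m)) : ℝ :=
  if S = ∅ then 1 - ∑ i, b i else ∑ i : Fin m, if S = {i} then b i else 0

/-- membership in `M_1(b)`: a probability function with `E_x(ℓ_i) = b_i` for all `i`. -/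
def MemM1 {m : ℕ} (b : Fin m → ℝ) (x : Finset (Fin m) → ℝ) : Prop :=
  (∀ S, 0 ≤ x S) ∧ (∑ S, x S = 1) ∧ (∀ i, ∑ S, ell i S * x S = b i)

/-- membership in `M_n(b)`: a probability function on `𝓛^n` satisfying, for every step `k`,
every prefix `λ` and every `i`, the conditional moment condition. -/
def MemMn {m n : ℕ} (b : Fin m → ℝ) (x : (Fin n → Finset (Fin m)) → ℝ) : Prop :=
  (∀ ω, 0 ≤ x ω) ∧ (∑ ω, x ω = 1) ∧
  (∀ (k : Fin n) (lam : Fin n → Finset (Fin m)) (i : Fin m),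
    (∑ ω, if ∀ j : Fin n, j < k → ω j = lam j then ell i (ω k) * x ω else 0) =
      b i * ∑ ω, if ∀ j : Fin n, j < k → ω j = lam j then x ω else 0)

/-- supermodular function on `𝓛`. -/
def Supermod {m : ℕ} (f : Finset (Fin m) → ℝ) : Prop :=
  ∀ S T, f S + f T ≤ f (S ∪ T) + f (S ∩ T)

/-- fibrewise supermodular function on `𝓛^n`. -/
def FibSupermod {m n : ℕ} (f : (Fin n → Finset (Fin m)) → ℝ) : Prop :=
  ∀ (k : Fin n) (lam : Fin n → Finset (Fin m)),
    Supermod fun S => f (Function.update lam k S)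

/-- the product measure `q^{⊗n}`. -/
def prodM {m n : ℕ} (q : Finset (Fin m) → ℝ) (ω : Fin n → Finset (Fin m)) : ℝ :=
  ∏ k, q (ω k)

def dd {m : ℕ} (f : Finset (Fin m) → ℝ) (i : Fin m) : ℝ :=
  f (mu m ((i : ℕ) + 1)) - f (mu m (i : ℕ))

def gf {m : ℕ} (f : Finset (Fin m) → ℝ) (S : Finset (Fin m)) : ℝ :=
  f ∅ + ∑ i ∈ S, dd f i

lemma mem_mu {m j : ℕ} {i : Fin m} : i ∈ mu m j ↔ (i : ℕ) < j := by
  simp [mu]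

lemma incr_diff {m : ℕ} {f : Finset (Fin m) → ℝ} (hf : Supermod f)
    {A B : Finset (Fin m)} {i : Fin m} (hAB : A ⊆ B) (hi : i ∉ B) :
    f (insert i A) - f A ≤ f (insert i B) - f B := by
  have h := hf (insert i A) B
  have h1 : insert i A ∪ B = insert i B := by
    rw [Finset.insert_union, Finset.union_eq_right.mpr hAB]
  have h2 : insert i A ∩ B = A := by
    rw [Finset.insert_inter_of_notMem hi, Finset.inter_eq_left.mpr hAB]
  rw [h1, h2] at h
  linarith

lemma mu_succ {m : ℕ} {j : ℕ} (h : j < m) :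
    mu m (j + 1) = insert (⟨j, h⟩ : Fin m) (mu m j) := by
  ext k
  simp only [mem_mu, Finset.mem_insert, Fin.ext_iff]
  omega

lemma f_le_gf {m : ℕ} {f : Finset (Fin m) → ℝ} (hf : Supermod f)
    (S : Finset (Fin m)) : f S ≤ gf f S := by
  induction S using Finset.strongInduction with
  | _ S ih =>
    rcases S.eq_empty_or_nonempty with rfl | hS
    · simp [gf]
    · set i := S.max' hS with hidef
      have hi : i ∈ S := S.max'_mem hS
      set A := S.erase i with hA
      have hAS : A ⊂ S := Finset.erase_ssubset hi
      have hsub : A ⊆ mu m (i : ℕ) := by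
        intro j hj
        have hjS : j ∈ S := Finset.mem_of_mem_erase hj
        have hji : j ≠ i := Finset.ne_of_mem_erase hj
        have hle : j ≤ i := S.le_max' j hjS
        rw [mem_mu]
        exact lt_of_le_of_ne hle (by simpa [Fin.ext_iff] using hji)
      have hniB : i ∉ mu m (i : ℕ) := by simp [mem_mu]
      have key := incr_diff hf hsub hniB
      have hins : insert i A = S := Finset.insert_erase hi
      have hmu : insert i (mu m (i : ℕ)) = mu m ((i : ℕ) + 1) := by
        rw [mu_succ i.isLt]
      rw [hins, hmu] at key
      have h1 : f S ≤ f A + dd f i := by unfold dd; linarith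
      have h2 := ih A hAS
      have hniA : i ∉ A := Finset.notMem_erase _ _
      have h3 : gf f S = gf f A + dd f i := by
        unfold gf
        rw [← hins, Finset.sum_insert hniA]; ring
      linarith

lemma f_eq_gf_chain {m : ℕ} (f : Finset (Fin m) → ℝ) :
    ∀ j, j ≤ m → f (mu m j) = gf f (mu m j) := by
  intro j
  induction j with
  | zero =>
    intro _
    have : mu m 0 = (∅ : Finset (Fin m)) := by
      ext k; simp [mem_mu]
    simp [this, gf]
  | succ j ih =>
    intro hj
    have hjm : j < m := hj
    have h1 := ih (le_of_lt hjm)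
    have h2 : mu m (j + 1) = insert (⟨j, hjm⟩ : Fin m) (mu m j) := mu_succ hjm
    have hni : (⟨j, hjm⟩ : Fin m) ∉ mu m j := by simp [mem_mu]
    have h3 : gf f (mu m (j + 1)) = gf f (mu m j) + dd f ⟨j, hjm⟩ := by
      unfold gf; rw [h2, Finset.sum_insert hni]; ring
    have h4 : dd f ⟨j, hjm⟩ = f (mu m (j + 1)) - f (mu m j) := by
      unfold dd; simp
    rw [h3, h4, ← h1]; ring

lemma exp_gf {m : ℕ} (f : Finset (Fin m) → ℝ) (b : Fin m → ℝ)
    (x : Finset (Fin m) → ℝ) (hx : MemM1 b x) :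
    ∑ S, gf f S * x S = f ∅ + ∑ i, dd f i * b i := by
  obtain ⟨hpos, hsum, hmom⟩ := hx
  have key : ∀ S : Finset (Fin m), gf f S * x S
      = f ∅ * x S + ∑ i, ell i S * (dd f i * x S) := by
    intro S
    unfold gf
    rw [add_mul, Finset.sum_mul]
    congr 1
    have h5 : ∑ i : Fin m, ell i S * (dd f i * x S) = ∑ i ∈ S, dd f i * x S := by
      simp [ell, ite_mul]
    rw [h5]
  calc ∑ S, gf f S * x S
      = ∑ S, (f ∅ * x S + ∑ i, ell i S * (dd f i * x S)) :=
        Finset.sum_congr rfl fun S _ => key S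
    _ = f ∅ * ∑ S, x S + ∑ i, ∑ S, ell i S * (dd f i * x S) := by
        rw [Finset.sum_add_distrib, Finset.mul_sum, Finset.sum_comm]
    _ = f ∅ + ∑ i, dd f i * b i := by
        rw [hsum, mul_one]
        congr 1
        apply Finset.sum_congr rfl
        intro i _
        rw [← hmom i, Finset.mul_sum]
        apply Finset.sum_congr rfl
        intro S _
        ring

lemma bp_step {m : ℕ} (b : Fin m → ℝ) (hmono : ∀ i j : Fin m, i ≤ j → b j ≤ b i)
    (hb1 : ∀ i, b i ≤ 1) (hb0 : ∀ i, 0 ≤ b i) (j : ℕ) :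
    bpaper b (j + 1) ≤ bpaper b j := by
  rcases Nat.eq_zero_or_pos j with rfl | hj
  · have h0 : bpaper b 0 = 1 := by simp [bpaper]
    rw [h0]
    unfold bpaper
    split_ifs with h h' <;> first | exact le_rfl | exact hb1 _ | norm_num
  · unfold bpaper
    rw [if_neg (by omega), if_neg (by omega)]
    split_ifs with h1 h2 h2
    · exact hmono ⟨j - 1, h2⟩ ⟨j + 1 - 1, h1⟩ (by simp)
    · omega
    · exact hb0 _
    · exact le_rfl

lemma bp_last {m : ℕ} (b : Fin m → ℝ) : bpaper b (m + 1) = 0 := by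
  unfold bpaper
  rw [if_neg (by omega), dif_neg (by omega)]

lemma bp_fin {m : ℕ} (b : Fin m → ℝ) (i : Fin m) : bpaper b ((i : ℕ) + 1) = b i := by
  unfold bpaper
  rw [if_neg (by omega), dif_pos (by simpa using i.isLt)]
  simp

lemma qStar_nonneg {m : ℕ} (b : Fin m → ℝ) (hmono : ∀ i j : Fin m, i ≤ j → b j ≤ b i)
    (hb1 : ∀ i, b i ≤ 1) (hb0 : ∀ i, 0 ≤ b i) (S : Finset (Fin m)) : 0 ≤ qStar b S := by
  apply Finset.sum_nonneg
  intro j _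
  split
  · linarith [bp_step b hmono hb1 hb0 j]
  · exact le_rfl

lemma qStar_sum {m : ℕ} (b : Fin m → ℝ) : ∑ S, qStar b S = 1 := by
  unfold qStar
  rw [Finset.sum_comm]
  have : ∀ j ∈ Finset.range (m + 1),
      (∑ S : Finset (Fin m), if S = mu m j then bpaper b j - bpaper b (j + 1) else 0)
      = bpaper b j - bpaper b (j + 1) := by
    intro j _
    simp
  rw [Finset.sum_congr rfl this, Finset.sum_range_sub' (fun j => bpaper b j) (m + 1),
    bp_last]
  simp [bpaper]

lemma qStar_mom {m : ℕ} (b : Fin m → ℝ) (i : Fin m) :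
    ∑ S, ell i S * qStar b S = b i := by
  have step1 : ∀ S : Finset (Fin m), ell i S * qStar b S
      = ∑ j ∈ Finset.range (m + 1), if S = mu m j then ell i S * (bpaper b j - bpaper b (j + 1)) else 0 := by
    intro S
    unfold qStar
    rw [Finset.mul_sum]
    apply Finset.sum_congr rfl
    intro j _
    split <;> simp
  rw [Finset.sum_congr rfl fun S _ => step1 S, Finset.sum_comm]
  have step2 : ∀ j ∈ Finset.range (m + 1),
      (∑ S : Finset (Fin m), if S = mu m j then ell i S * (bpaper b j - bpaper b (j + 1)) else 0)
      = if (i : ℕ) < j then bpaper b j - bpaper b (j + 1) else 0 := by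
    intro j _
    rw [Finset.sum_ite_eq' Finset.univ (mu m j)]
    simp [ell, mem_mu]
  rw [Finset.sum_congr rfl step2]
  have hrange : Finset.range (m + 1) = Finset.Ico 0 (m + 1) := by
    rw [Finset.range_eq_Ico]
  rw [hrange, ← Finset.sum_Ico_consecutive _ (Nat.zero_le ((i : ℕ) + 1)) (by omega : (i : ℕ) + 1 ≤ m + 1)]
  have hz : ∑ j ∈ Finset.Ico 0 ((i : ℕ) + 1), (if (i : ℕ) < j then bpaper b j - bpaper b (j + 1) else 0) = 0 := by
    apply Finset.sum_eq_zero
    intro j hj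
    rw [Finset.mem_Ico] at hj
    rw [if_neg (by omega)]
  rw [hz, zero_add]
  have hone : ∑ j ∈ Finset.Ico ((i : ℕ) + 1) (m + 1), (if (i : ℕ) < j then bpaper b j - bpaper b (j + 1) else 0)
      = ∑ j ∈ Finset.Ico ((i : ℕ) + 1) (m + 1), (bpaper b j - bpaper b (j + 1)) := by
    apply Finset.sum_congr rfl
    intro j hj
    rw [Finset.mem_Ico] at hj
    rw [if_pos (by omega)]
  rw [hone, Finset.sum_Ico_eq_sub _ (by omega : (i : ℕ) + 1 ≤ m + 1),
    Finset.sum_range_sub' (fun j => bpaper b j) (m + 1),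
    Finset.sum_range_sub' (fun j => bpaper b j) ((i : ℕ) + 1),
    bp_last, bp_fin]
  simp [bpaper]

/-- single-step maximization: for supermodular `f`, the expectation over
`M_1(b)` is maximized at the upper supermodular vertex measure `q*`. -/
theorem single_step_max {m : ℕ} (hm : 0 < m) (b : Fin m → ℝ)
    (hmono : ∀ i j : Fin m, i ≤ j → b j ≤ b i)
    (hb1 : ∀ i, b i ≤ 1) (hb0 : ∀ i, 0 ≤ b i)
    (f : Finset (Fin m) → ℝ) (hf : Supermod f) :
    (∀ x, MemM1 b x → ∑ S, f S * x S ≤ ∑ S, f S * qStar b S) ∧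
    IsGreatest {r : ℝ | ∃ x, MemM1 b x ∧ r = ∑ S, f S * x S}
      (∑ S, f S * qStar b S) := by
  have hq : MemM1 b (qStar b) :=
    ⟨qStar_nonneg b hmono hb1 hb0, qStar_sum b, qStar_mom b⟩
  have hEq : ∑ S, f S * qStar b S = ∑ S, gf f S * qStar b S := by
    apply Finset.sum_congr rfl
    intro S _
    by_cases h : ∃ j ≤ m, S = mu m j
    · obtain ⟨j, hj, rfl⟩ := h
      rw [f_eq_gf_chain f j hj]
    · have hz : qStar b S = 0 := by
        apply Finset.sum_eq_zero
        intro j hj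
        rw [Finset.mem_range] at hj
        rw [if_neg]
        intro hS
        exact h ⟨j, by omega, hS⟩
      rw [hz, mul_zero, mul_zero]
  have main : ∀ x, MemM1 b x → ∑ S, f S * x S ≤ ∑ S, f S * qStar b S := by
    intro x hx
    calc ∑ S, f S * x S ≤ ∑ S, gf f S * x S := by
          apply Finset.sum_le_sum
          intro S _
          exact mul_le_mul_of_nonneg_right (f_le_gf hf S) (hx.1 S)
      _ = f ∅ + ∑ i, dd f i * b i := exp_gf f b x hx
      _ = ∑ S, gf f S * qStar b S := (exp_gf f b (qStar b) hq).symm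
      _ = ∑ S, f S * qStar b S := hEq.symm
  refine ⟨main, ⟨⟨qStar b, hq, rfl⟩, ?_⟩⟩
  rintro r ⟨x, hx, rfl⟩
  exact main x hx
end
end

section
/- (Theorem on single-step minimization.) Assume 1 ≥ b_1 ≥ b_2 ≥ … ≥ b_m ≥ 0 and Σ_{i=1}^m b_i ≤ 1. Then for every supermodular function f : 𝓛 → ℝ and every x ∈ M_1(b), one has E_x(f) ≥ E_{q_*}(f); consequently the minimum of E_x(f) over x ∈ M_1(b) equals E_{q_*}(f). -/
noncomputable section

open Finset

lemma qLow_expect {m : ℕ} (b : Fin m → ℝ) (g : Finset (Fin m) → ℝ) :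
    ∑ S, g S * qLow b S = g ∅ * (1 - ∑ i, b i) + ∑ i, g {i} * b i := by
  have h : ∀ S : Finset (Fin m), g S * qLow b S =
      (if S = ∅ then g S * (1 - ∑ i, b i) else 0) +
      ∑ i : Fin m, if S = {i} then g S * b i else 0 := by
    intro S
    by_cases hS : S = ∅
    · have : ∀ i : Fin m, (∅ : Finset (Fin m)) ≠ {i} := fun i =>
        (Finset.singleton_ne_empty i).symm
      simp [qLow, hS, this]
    · simp [qLow, hS, Finset.mul_sum, mul_ite]
  rw [Finset.sum_congr rfl fun S _ => h S, Finset.sum_add_distrib,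
    Finset.sum_ite_eq' Finset.univ (∅ : Finset (Fin m)),
    Finset.sum_comm]
  simp

lemma key_lb {m : ℕ} (f : Finset (Fin m) → ℝ) (hf : Supermod f) (S : Finset (Fin m)) :
    f ∅ + ∑ i ∈ S, (f {i} - f ∅) ≤ f S := by
  induction S using Finset.induction_on with
  | empty => simp
  | @insert a S ha ih =>
    have h := hf S {a}
    have hu : S ∪ {a} = insert a S := by
      rw [Finset.union_comm]; rfl
    rw [hu, Finset.inter_singleton_of_notMem ha] at h
    rw [Finset.sum_insert ha]
    linarith

lemma qLow_mem {m : ℕ} (b : Fin m → ℝ) (hb0 : ∀ i, 0 ≤ b i)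
    (hsum : ∑ i, b i ≤ 1) : MemM1 b (qLow b) := by
  refine ⟨?_, ?_, ?_⟩
  · intro S
    unfold qLow
    split
    · linarith
    · exact Finset.sum_nonneg fun i _ => by split <;> simp [hb0 i]
  · have := qLow_expect b (fun _ => (1 : ℝ))
    simpa using this
  · intro i
    have := qLow_expect b (ell i)
    have h1 : ell i (∅ : Finset (Fin m)) = 0 := by simp [ell]
    have h2 : ∀ j : Fin m, ell i ({j} : Finset (Fin m)) = if j = i then 1 else 0 := by
      intro j; simp [ell, eq_comm]
    rw [this, h1]
    simp only [h2]
    simp [Finset.sum_ite_eq]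

lemma lb_all {m : ℕ} (b : Fin m → ℝ) (f : Finset (Fin m) → ℝ) (hf : Supermod f)
    (x : Finset (Fin m) → ℝ) (hx : MemM1 b x) :
    ∑ S, f S * qLow b S ≤ ∑ S, f S * x S := by
  obtain ⟨hx0, hx1, hxm⟩ := hx
  have step1 : ∑ S, (f ∅ + ∑ i ∈ S, (f {i} - f ∅)) * x S ≤ ∑ S, f S * x S :=
    Finset.sum_le_sum fun S _ =>
      mul_le_mul_of_nonneg_right (key_lb f hf S) (hx0 S)
  have hrw : ∀ S : Finset (Fin m),
      (f ∅ + ∑ i ∈ S, (f {i} - f ∅)) * x S =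
      f ∅ * x S + ∑ i : Fin m, (f {i} - f ∅) * (ell i S * x S) := by
    intro S
    have : ∑ i ∈ S, (f {i} - f ∅) = ∑ i : Fin m, ell i S * (f {i} - f ∅) := by
      simp only [ell, ite_mul, one_mul, zero_mul]
      rw [Finset.sum_ite_mem, Finset.univ_inter]
    rw [this, add_mul, Finset.sum_mul]
    congr 1
    refine Finset.sum_congr rfl fun i _ => by ring
  have step2 : ∑ S, (f ∅ + ∑ i ∈ S, (f {i} - f ∅)) * x S =
      f ∅ + ∑ i, (f {i} - f ∅) * b i := by
    rw [Finset.sum_congr rfl fun S _ => hrw S, Finset.sum_add_distrib,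
      ← Finset.mul_sum, hx1, mul_one, Finset.sum_comm]
    congr 1
    refine Finset.sum_congr rfl fun i _ => ?_
    rw [← Finset.mul_sum, hxm i]
  have step3 : ∑ S, f S * qLow b S = f ∅ + ∑ i, (f {i} - f ∅) * b i := by
    rw [qLow_expect]
    have : ∑ i, (f {i} - f ∅) * b i = (∑ i, f {i} * b i) - f ∅ * ∑ i, b i := by
      rw [Finset.mul_sum, ← Finset.sum_sub_distrib]
      exact Finset.sum_congr rfl fun i _ => by ring
    rw [this]; ring
  linarith [step1, step2 ▸ step1, step3]

/-- single-step minimization: if moreover `Σ b_i ≤ 1`, the expectation of a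
supermodular `f` over `M_1(b)` is minimized at the lower supermodular vertex measure `q_*`. -/
theorem single_step_min {m : ℕ} (hm : 0 < m) (b : Fin m → ℝ)
    (hmono : ∀ i j : Fin m, i ≤ j → b j ≤ b i)
    (hb1 : ∀ i, b i ≤ 1) (hb0 : ∀ i, 0 ≤ b i)
    (hsum : ∑ i, b i ≤ 1)
    (f : Finset (Fin m) → ℝ) (hf : Supermod f) :
    (∀ x, MemM1 b x → ∑ S, f S * qLow b S ≤ ∑ S, f S * x S) ∧
    IsLeast {r : ℝ | ∃ x, MemM1 b x ∧ r = ∑ S, f S * x S}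
      (∑ S, f S * qLow b S) := by
  have hlb := fun x hx => lb_all b f hf x hx
  refine ⟨hlb, ⟨qLow b, qLow_mem b hb0 hsum, rfl⟩, ?_⟩
  rintro r ⟨x, hx, rfl⟩
  exact hlb x hx
end
end

section
/- Let f : 𝓛 → ℝ be supermodular and let μ_j = {1,…,j} for 0 ≤ j ≤ m. Then for every S ∈ 𝓛: f(S) ≤ f(∅) + Σ_{i∈S} (f(μ_i) − f(μ_{i−1})). Equivalently, with α_0 = f(μ_0) and α_i = f(μ_i) − f(μ_{i−1}), the function g = α_0 + Σ_{i=1}^m α_i ℓ_i satisfies g(S) ≥ f(S) for all S ∈ 𝓛, with equality g(μ_j) = f(μ_j) for every j. -/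
noncomputable section

open Finset

/-- a supermodular `f` is dominated by the affine function
`g(S) = f(∅) + Σ_{i∈S} (f(μ_i) − f(μ_{i−1}))`, with equality on each `μ_j`. -/
theorem supermodular_upper_affine_bound {m : ℕ} (hm : 0 < m)
    (f : Finset (Fin m) → ℝ) (hf : Supermod f) :
    (∀ S : Finset (Fin m),
      f S ≤ f ∅ + ∑ i ∈ S, (f (mu m ((i : ℕ) + 1)) - f (mu m (i : ℕ)))) ∧
    (∀ j ≤ m,
      f ∅ + ∑ i ∈ mu m j, (f (mu m ((i : ℕ) + 1)) - f (mu m (i : ℕ))) = f (mu m j)) := by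
  have hmu0 : mu m 0 = ∅ := by
    ext x; simp [mu]
  constructor
  · intro S
    induction S using Finset.strongInduction with
    | _ S ih =>
      rcases S.eq_empty_or_nonempty with rfl | hS
      · simp
      · set i := S.max' hS with hidef
        have hiS : i ∈ S := S.max'_mem hS
        have hsub : S.erase i ⊂ S := Finset.erase_ssubset hiS
        have hunion : S ∪ mu m (i : ℕ) = mu m ((i : ℕ) + 1) := by
          ext x
          simp only [mu, Finset.mem_union, Finset.mem_filter, Finset.mem_univ, true_and]
          constructor
          · rintro (hx | hx)
            · exact Nat.lt_succ_of_le (S.le_max' x hx)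
            · omega
          · intro hx
            rcases Nat.lt_succ_iff_lt_or_eq.mp hx with h | h
            · right; exact h
            · left; have hxi : x = i := Fin.ext h; rw [hxi]; exact hiS
        have hinter : S ∩ mu m (i : ℕ) = S.erase i := by
          ext x
          simp only [mu, Finset.mem_inter, Finset.mem_filter, Finset.mem_univ, true_and,
            Finset.mem_erase]
          constructor
          · rintro ⟨hx, hlt⟩
            refine ⟨fun he => ?_, hx⟩
            rw [he] at hlt; omega
          · rintro ⟨hne, hx⟩
            refine ⟨hx, ?_⟩
            have hle : (x : ℕ) ≤ (i : ℕ) := S.le_max' x hx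
            have : (x : ℕ) ≠ (i : ℕ) := fun h => hne (Fin.ext h)
            omega
        have key := hf S (mu m (i : ℕ))
        rw [hunion, hinter] at key
        have ihe := ih _ hsub
        have sumeq : ∑ j ∈ S, (f (mu m ((j : ℕ) + 1)) - f (mu m (j : ℕ))) =
            (∑ j ∈ S.erase i, (f (mu m ((j : ℕ) + 1)) - f (mu m (j : ℕ)))) +
              (f (mu m ((i : ℕ) + 1)) - f (mu m (i : ℕ))) :=
          (Finset.sum_erase_add S _ hiS).symm
        linarith
  · intro j hj
    induction j with
    | zero => simp [hmu0]
    | succ k ihk =>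
      have hk : k < m := hj
      have hstep : mu m (k + 1) = insert (⟨k, hk⟩ : Fin m) (mu m k) := by
        ext x
        simp only [mu, Finset.mem_filter, Finset.mem_univ, true_and, Finset.mem_insert]
        constructor
        · intro hx
          rcases Nat.lt_succ_iff_lt_or_eq.mp hx with h | h
          · right; exact h
          · left; exact Fin.ext h
        · rintro (rfl | h)
          · simp
          · omega
      have hnot : (⟨k, hk⟩ : Fin m) ∉ mu m k := by
        simp [mu]
      have ihk' := ihk (le_of_lt hk)
      rw [hstep, Finset.sum_insert hnot]
      have hv : ((⟨k, hk⟩ : Fin m) : ℕ) = k := rfl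
      rw [hv, ← hstep]
      linarith
end
end

section
/- (Main multi-step minimization theorem.) Assume 1 ≥ b_1 ≥ b_2 ≥ … ≥ b_m ≥ 0 and Σ_{i=1}^m b_i ≤ 1. Then for every fibrewise supermodular function f : 𝓛^n → ℝ and every x ∈ M_n(b), one has E_x(f) ≥ E_{(q_*)^{⊗n}}(f); consequently the minimum of E_x(f) over x ∈ M_n(b) equals E_{(q_*)^{⊗n}}(f), i.e. it is attained at the product of n copies of the lower supermodular vertex measure. -/
noncomputable section

open Finset

namespace MSMAux

variable {m n : ℕ}

lemma fin_ne_of_val_lt {j k : Fin n} (h : (j : ℕ) < (k : ℕ)) : j ≠ k :=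
  fun e => by subst e; exact lt_irrefl _ h

lemma sum_ell_mul (S : Finset (Fin m)) (c : Fin m → ℝ) :
    ∑ i : Fin m, ell i S * c i = ∑ i ∈ S, c i := by
  simp only [ell, ite_mul, one_mul, zero_mul]
  rw [Finset.sum_ite_mem, Finset.univ_inter]

lemma supermod_lb {h : Finset (Fin m) → ℝ} (hsm : Supermod h) (S : Finset (Fin m)) :
    h ∅ + ∑ i ∈ S, (h {i} - h ∅) ≤ h S := by
  induction S using Finset.induction_on with
  | empty => simp
  | @insert a s ha ih =>
    have h1 := hsm s {a}
    have h2 : s ∪ {a} = insert a s := by rw [Finset.union_comm, ← Finset.insert_eq]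
    have h3 : s ∩ {a} = ∅ := by
      rw [Finset.inter_comm]; exact Finset.singleton_inter_of_notMem ha
    rw [h2, h3] at h1
    rw [Finset.sum_insert ha]
    linarith

lemma qLow_exp (b : Fin m → ℝ) (h : Finset (Fin m) → ℝ) :
    ∑ S, qLow b S * h S = (1 - ∑ i, b i) * h ∅ + ∑ i, b i * h {i} := by
  have key : ∀ S : Finset (Fin m), qLow b S * h S =
      (if S = ∅ then (1 - ∑ i, b i) * h S else 0) +
      ∑ i, (if S = {i} then b i * h S else 0) := by
    intro S
    by_cases hS : S = ∅
    · subst hS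
      have : ∀ i : Fin m, ((∅ : Finset (Fin m)) = {i}) = False :=
        fun i => eq_false (Ne.symm (Finset.singleton_ne_empty i))
      simp [qLow, this]
    · simp [qLow, hS, Finset.sum_mul, ite_mul, zero_mul]
  rw [Finset.sum_congr rfl fun S _ => key S, Finset.sum_add_distrib]
  congr 1
  · rw [Finset.sum_ite_eq']; simp
  · rw [Finset.sum_comm]
    apply Finset.sum_congr rfl
    intro i _
    rw [Finset.sum_ite_eq']; simp

lemma qLow_sum_one (b : Fin m → ℝ) : ∑ S, qLow b S = 1 := by
  have h := qLow_exp b (fun _ => 1)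
  simp only [mul_one] at h
  rw [h]; ring

lemma qLow_mom (b : Fin m → ℝ) (i : Fin m) : ∑ S, ell i S * qLow b S = b i := by
  have h : ∑ S, qLow b S * ell i S = b i := by
    rw [qLow_exp]
    simp [ell]
  rw [← h]
  exact Finset.sum_congr rfl fun S _ => by ring

lemma qLow_nonneg (b : Fin m → ℝ) (hb0 : ∀ i, 0 ≤ b i) (hsum : ∑ i, b i ≤ 1)
    (S : Finset (Fin m)) : 0 ≤ qLow b S := by
  unfold qLow
  split
  · linarith
  · apply Finset.sum_nonneg
    intro i _
    split
    · exact hb0 i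
    · exact le_refl 0

lemma one_dim (b : Fin m → ℝ) {h : Finset (Fin m) → ℝ} (hsm : Supermod h)
    (y : Finset (Fin m) → ℝ) (hy : ∀ S, 0 ≤ y S) (w : ℝ)
    (hw : ∑ S, y S = w) (hmom : ∀ i : Fin m, ∑ S, ell i S * y S = b i * w) :
    (∑ S, qLow b S * h S) * w ≤ ∑ S, h S * y S := by
  have e1 : ∀ S : Finset (Fin m), (h ∅ + ∑ i ∈ S, (h {i} - h ∅)) * y S
      = h ∅ * y S + ∑ i : Fin m, (h {i} - h ∅) * (ell i S * y S) := by
    intro S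
    rw [← sum_ell_mul S (fun i => h {i} - h ∅), add_mul, Finset.sum_mul]
    congr 1
    exact Finset.sum_congr rfl fun i _ => by ring
  have e2 : ∀ i : Fin m, ∑ S, (h {i} - h ∅) * (ell i S * y S) = (h {i} - h ∅) * (b i * w) := by
    intro i
    rw [← Finset.mul_sum, hmom i]
  have e3 : ∑ i : Fin m, (h {i} - h ∅) * (b i * w)
      = (∑ i, b i * h {i}) * w - (∑ i, b i) * (h ∅ * w) := by
    rw [Finset.sum_mul, Finset.sum_mul, ← Finset.sum_sub_distrib]
    exact Finset.sum_congr rfl fun i _ => by ring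
  have step1 : ∑ S, (h ∅ + ∑ i ∈ S, (h {i} - h ∅)) * y S = (∑ S, qLow b S * h S) * w := by
    calc ∑ S, (h ∅ + ∑ i ∈ S, (h {i} - h ∅)) * y S
        = ∑ S, (h ∅ * y S + ∑ i : Fin m, (h {i} - h ∅) * (ell i S * y S)) :=
          Finset.sum_congr rfl fun S _ => e1 S
      _ = h ∅ * w + ∑ i : Fin m, (h {i} - h ∅) * (b i * w) := by
          rw [Finset.sum_add_distrib, ← Finset.mul_sum, hw, Finset.sum_comm]
          congr 1
          exact Finset.sum_congr rfl fun i _ => e2 i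
      _ = (∑ S, qLow b S * h S) * w := by
          rw [qLow_exp, e3]; ring
  rw [← step1]
  apply Finset.sum_le_sum
  intro S _
  exact mul_le_mul_of_nonneg_right (supermod_lb hsm S) (hy S)



def DepBelow (t : ℕ) (g : (Fin n → Finset (Fin m)) → ℝ) : Prop :=
  ∀ ω ω' : Fin n → Finset (Fin m), (∀ j : Fin n, (j : ℕ) < t → ω j = ω' j) → g ω = g ω'

def Tk (q : Finset (Fin m) → ℝ) (k : Fin n) (g : (Fin n → Finset (Fin m)) → ℝ) :
    (Fin n → Finset (Fin m)) → ℝ :=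
  fun ω => ∑ S, q S * g (Function.update ω k S)

lemma supermod_combo {ι : Type*} [Fintype ι] (c : ι → ℝ) (hc : ∀ i, 0 ≤ c i)
    (g : ι → Finset (Fin m) → ℝ) (hg : ∀ i, Supermod (g i)) :
    Supermod (fun S => ∑ i, c i * g i S) := by
  intro S T
  rw [← Finset.sum_add_distrib, ← Finset.sum_add_distrib]
  apply Finset.sum_le_sum
  intro i _
  have h := mul_le_mul_of_nonneg_left (hg i S T) (hc i)
  rw [mul_add, mul_add] at h
  linarith

lemma Tk_fibsup (q : Finset (Fin m) → ℝ) (hq : ∀ S, 0 ≤ q S) (k : Fin n)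
    (g : (Fin n → Finset (Fin m)) → ℝ) (hg : FibSupermod g) : FibSupermod (Tk q k g) := by
  intro j lam
  by_cases hjk : j = k
  · subst hjk
    have hconst : ∀ S, Tk q j g (Function.update lam j S)
        = ∑ S', q S' * g (Function.update lam j S') := by
      intro S
      exact Finset.sum_congr rfl fun S' _ => by rw [Function.update_idem]
    intro S T
    simp only [hconst]
    exact le_refl _
  · have heq : (fun S => Tk q k g (Function.update lam j S))
        = fun S => ∑ S', q S' * g (Function.update (Function.update lam k S') j S) := by
      funext S
      exact Finset.sum_congr rfl fun S' _ => by rw [Function.update_comm hjk]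
    show Supermod _
    rw [heq]
    exact supermod_combo q hq _ (fun S' => hg j (Function.update lam k S'))

lemma Tk_dep (q : Finset (Fin m) → ℝ) (k : Fin n) (g : (Fin n → Finset (Fin m)) → ℝ)
    (hg : DepBelow ((k : ℕ) + 1) g) : DepBelow (k : ℕ) (Tk q k g) := by
  intro ω ω' hagree
  apply Finset.sum_congr rfl
  intro S _
  congr 1
  apply hg
  intro j hj
  rcases Nat.lt_succ_iff_lt_or_eq.mp hj with hlt | heq
  · rw [Function.update_of_ne (fin_ne_of_val_lt hlt), Function.update_of_ne (fin_ne_of_val_lt hlt)]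
    exact hagree j hlt
  · have hjk : j = k := Fin.ext heq
    subst hjk
    rw [Function.update_self, Function.update_self]

def swapE (k : Fin n) :
    ((Fin n → Finset (Fin m)) × Finset (Fin m)) ≃ ((Fin n → Finset (Fin m)) × Finset (Fin m)) where
  toFun p := (Function.update p.1 k p.2, p.1 k)
  invFun p := (Function.update p.1 k p.2, p.1 k)
  left_inv p := by
    obtain ⟨ω, S⟩ := p
    simp [Function.update_idem, Function.update_eq_self]
  right_inv p := by
    obtain ⟨ω, S⟩ := p
    simp [Function.update_idem, Function.update_eq_self]

lemma prodM_erase (q : Finset (Fin m) → ℝ) (ω : Fin n → Finset (Fin m)) (k : Fin n) :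
    q (ω k) * ∏ j ∈ Finset.univ.erase k, q (ω j) = prodM q ω := by
  unfold prodM
  exact Finset.mul_prod_erase Finset.univ (fun j => q (ω j)) (Finset.mem_univ k)

lemma prodM_update (q : Finset (Fin m) → ℝ) (ω : Fin n → Finset (Fin m)) (k : Fin n)
    (S : Finset (Fin m)) :
    prodM q (Function.update ω k S) = q S * ∏ j ∈ Finset.univ.erase k, q (ω j) := by
  unfold prodM
  rw [← Finset.mul_prod_erase Finset.univ _ (Finset.mem_univ k)]
  congr 1
  · rw [Function.update_self]
  · exact Finset.prod_congr rfl fun j hj =>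
      by rw [Function.update_of_ne (Finset.mem_erase.mp hj).1]

lemma Tk_prod (q : Finset (Fin m) → ℝ) (hq1 : ∑ S, q S = 1) (k : Fin n)
    (g : (Fin n → Finset (Fin m)) → ℝ) :
    ∑ ω, Tk q k g ω * prodM q ω = ∑ ω, g ω * prodM q ω := by
  have h1 : ∑ ω, Tk q k g ω * prodM q ω
      = ∑ p : (Fin n → Finset (Fin m)) × Finset (Fin m),
          q p.2 * g (Function.update p.1 k p.2) * prodM q p.1 := by
    rw [Fintype.sum_prod_type]
    apply Finset.sum_congr rfl
    intro ω _
    simp only [Tk, Finset.sum_mul]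
  rw [h1, ← Equiv.sum_comp (swapE k)
    (fun p : (Fin n → Finset (Fin m)) × Finset (Fin m) =>
      q p.2 * g (Function.update p.1 k p.2) * prodM q p.1)]
  rw [Fintype.sum_prod_type]
  apply Finset.sum_congr rfl
  intro ω _
  simp only [swapE, Equiv.coe_fn_mk]
  calc ∑ S : Finset (Fin m), q (ω k) * g (Function.update (Function.update ω k S) k (ω k))
        * prodM q (Function.update ω k S)
      = ∑ S, q S * (g ω * prodM q ω) := by
        apply Finset.sum_congr rfl
        intro S _
        rw [Function.update_idem, Function.update_eq_self, prodM_update,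
          ← prodM_erase q ω k]
        ring
    _ = g ω * prodM q ω := by rw [← Finset.sum_mul, hq1, one_mul]

def Pref (k : Fin n) (ω : Fin n → Finset (Fin m)) : Fin n → Finset (Fin m) :=
  fun j => if (j : ℕ) < (k : ℕ) then ω j else ∅

lemma Pref_idem (k : Fin n) (ω : Fin n → Finset (Fin m)) : Pref k (Pref k ω) = Pref k ω := by
  funext j
  by_cases hj : (j : ℕ) < (k : ℕ) <;> simp [Pref, hj]

lemma Pref_cond {k : Fin n} {lam : Fin n → Finset (Fin m)} (hlam : Pref k lam = lam)
    (ω : Fin n → Finset (Fin m)) :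
    Pref k ω = lam ↔ (∀ j : Fin n, j < k → ω j = lam j) := by
  constructor
  · intro hPω j hj
    have hj' : (j : ℕ) < (k : ℕ) := hj
    calc ω j = Pref k ω j := by simp [Pref, hj']
      _ = lam j := by rw [hPω]
  · intro hC
    funext j
    by_cases hj : (j : ℕ) < (k : ℕ)
    · have hj2 : j < k := hj
      simp [Pref, hj, hC j hj2]
    · have he : lam j = ∅ := by
        conv_lhs => rw [← hlam]
        simp [Pref, hj]
      simp [Pref, hj, he]

lemma onestep (b : Fin m → ℝ) (hb0 : ∀ i, 0 ≤ b i) (hsum : ∑ i, b i ≤ 1)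
    (x : (Fin n → Finset (Fin m)) → ℝ) (hx : MemMn b x)
    (k : Fin n) (g : (Fin n → Finset (Fin m)) → ℝ)
    (hg : FibSupermod g) (hdep : DepBelow ((k : ℕ) + 1) g) :
    ∑ ω, Tk (qLow b) k g ω * x ω ≤ ∑ ω, g ω * x ω := by
  classical
  have decomp : ∀ F : (Fin n → Finset (Fin m)) → ℝ,
      ∑ ω, F ω = ∑ lam, ∑ ω, if Pref k ω = lam then F ω else 0 := by
    intro F
    symm
    rw [Finset.sum_comm]
    apply Finset.sum_congr rfl
    intro ω _
    rw [Finset.sum_ite_eq Finset.univ (Pref k ω) (fun _ => F ω)]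
    simp
  rw [decomp (fun ω => Tk (qLow b) k g ω * x ω), decomp (fun ω => g ω * x ω)]
  apply Finset.sum_le_sum
  intro lam _
  by_cases hlam : Pref k lam = lam
  case neg =>
    have hz : ∀ (F : (Fin n → Finset (Fin m)) → ℝ) ω,
        (if Pref k ω = lam then F ω else 0) = 0 := by
      intro F ω
      rw [if_neg]
      intro hPω
      exact hlam (by rw [← hPω, Pref_idem, hPω])
    have z1 : ∑ ω, (if Pref k ω = lam then Tk (qLow b) k g ω * x ω else 0) = 0 :=
      Finset.sum_eq_zero fun ω _ => hz (fun ω => Tk (qLow b) k g ω * x ω) ω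
    have z2 : ∑ ω, (if Pref k ω = lam then g ω * x ω else 0) = 0 :=
      Finset.sum_eq_zero fun ω _ => hz (fun ω => g ω * x ω) ω
    rw [z1, z2]
  case pos =>
  have hcond := Pref_cond hlam
  have key : ∀ h : Finset (Fin m) → ℝ,
      ∑ ω, (if Pref k ω = lam then h (ω k) * x ω else 0)
        = ∑ S, h S * ∑ ω, (if Pref k ω = lam ∧ ω k = S then x ω else 0) := by
    intro h
    have e : ∀ S : Finset (Fin m),
        h S * ∑ ω, (if Pref k ω = lam ∧ ω k = S then x ω else 0)
          = ∑ ω, (if Pref k ω = lam ∧ ω k = S then h S * x ω else 0) := by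
      intro S
      rw [Finset.mul_sum]
      apply Finset.sum_congr rfl
      intro ω _
      by_cases hc : Pref k ω = lam ∧ ω k = S <;> simp [hc]
    rw [Finset.sum_congr rfl fun S _ => e S, Finset.sum_comm]
    apply Finset.sum_congr rfl
    intro ω _
    have e2 : ∀ S : Finset (Fin m), (if Pref k ω = lam ∧ ω k = S then h S * x ω else 0)
        = if ω k = S then (if Pref k ω = lam then h S * x ω else 0) else 0 := by
      intro S
      by_cases h1 : ω k = S <;> by_cases h2 : Pref k ω = lam <;> simp [h1, h2]
    rw [Finset.sum_congr rfl fun S _ => e2 S,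
      Finset.sum_ite_eq Finset.univ (ω k) (fun S => if Pref k ω = lam then h S * x ω else 0)]
    simp
  have hy0 : ∀ S : Finset (Fin m),
      0 ≤ ∑ ω, (if Pref k ω = lam ∧ ω k = S then x ω else 0) := by
    intro S
    apply Finset.sum_nonneg
    intro ω _
    by_cases hc : Pref k ω = lam ∧ ω k = S <;> simp [hc, hx.1 ω]
  have hsw : ∑ S, (∑ ω, (if Pref k ω = lam ∧ ω k = S then x ω else 0))
      = ∑ ω, (if Pref k ω = lam then x ω else 0) := by
    have h1 := key (fun _ => 1)
    simp only [one_mul] at h1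
    rw [← h1]
  have cv : ∀ F : (Fin n → Finset (Fin m)) → ℝ,
      ∑ ω, (if ∀ j : Fin n, j < k → ω j = lam j then F ω else 0)
        = ∑ ω, (if Pref k ω = lam then F ω else 0) := by
    intro F
    apply Finset.sum_congr rfl
    intro ω _
    exact if_congr (hcond ω).symm rfl rfl
  have hmomy : ∀ i : Fin m,
      ∑ S, ell i S * ∑ ω, (if Pref k ω = lam ∧ ω k = S then x ω else 0)
        = b i * ∑ ω, (if Pref k ω = lam then x ω else 0) := by
    intro i
    rw [← key (fun S => ell i S), ← cv (fun ω => ell i (ω k) * x ω), hx.2.2 k lam i,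
      cv (fun ω => x ω)]
  have hgh0 : ∀ ω, Pref k ω = lam → ∀ S,
      g (Function.update ω k S) = g (Function.update lam k S) := by
    intro ω hPω S
    apply hdep
    intro j hj
    rcases Nat.lt_succ_iff_lt_or_eq.mp hj with hlt | heq
    · have hne : j ≠ k := fin_ne_of_val_lt hlt
      rw [Function.update_of_ne hne, Function.update_of_ne hne]
      exact ((hcond ω).mp hPω) j hlt
    · have hjk : j = k := Fin.ext heq
      subst hjk
      rw [Function.update_self, Function.update_self]
  have hgω : ∀ ω, Pref k ω = lam → g ω = g (Function.update lam k (ω k)) := by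
    intro ω hPω
    have h1 := hgh0 ω hPω (ω k)
    rw [Function.update_eq_self] at h1
    exact h1
  have hL : ∑ ω, (if Pref k ω = lam then Tk (qLow b) k g ω * x ω else 0)
      = (∑ S, qLow b S * g (Function.update lam k S))
        * ∑ ω, (if Pref k ω = lam then x ω else 0) := by
    have e : ∀ ω, (if Pref k ω = lam then Tk (qLow b) k g ω * x ω else 0)
        = (if Pref k ω = lam
            then (∑ S, qLow b S * g (Function.update lam k S)) * x ω else 0) := by
      intro ω
      by_cases hPω : Pref k ω = lam
      · rw [if_pos hPω, if_pos hPω]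
        congr 1
        exact Finset.sum_congr rfl fun S _ => by rw [hgh0 ω hPω S]
      · rw [if_neg hPω, if_neg hPω]
    rw [Finset.sum_congr rfl fun ω _ => e ω, Finset.mul_sum]
    apply Finset.sum_congr rfl
    intro ω _
    by_cases hPω : Pref k ω = lam <;> simp [hPω]
  have hR : ∑ ω, (if Pref k ω = lam then g ω * x ω else 0)
      = ∑ S, g (Function.update lam k S)
          * ∑ ω, (if Pref k ω = lam ∧ ω k = S then x ω else 0) := by
    rw [← key (fun S => g (Function.update lam k S))]
    apply Finset.sum_congr rfl
    intro ω _
    by_cases hPω : Pref k ω = lam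
    · rw [if_pos hPω, if_pos hPω, ← hgω ω hPω]
    · rw [if_neg hPω, if_neg hPω]
  rw [hL, hR]
  exact one_dim b (hg k lam) _ hy0 _ hsw hmomy

lemma sum_prod_fn (c : Fin n → Finset (Fin m) → ℝ) :
    ∑ ω : Fin n → Finset (Fin m), ∏ j, c j (ω j) = ∏ j : Fin n, ∑ S, c j S := by
  rw [Finset.prod_univ_sum, Fintype.piFinset_univ]

lemma sum_prodM (q : Finset (Fin m) → ℝ) (hq1 : ∑ S, q S = 1) :
    ∑ ω : Fin n → Finset (Fin m), prodM q ω = 1 := by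
  have h1 : ∑ ω : Fin n → Finset (Fin m), prodM q ω
      = ∏ j : Fin n, ∑ S, q S := sum_prod_fn (fun _ S => q S)
  rw [h1, hq1]
  simp

lemma prodM_memMn (b : Fin m → ℝ) (q : Finset (Fin m) → ℝ) (hq0 : ∀ S, 0 ≤ q S)
    (hq1 : ∑ S, q S = 1) (hqm : ∀ i, ∑ S, ell i S * q S = b i) :
    MemMn (n := n) b (prodM q) := by
  refine ⟨fun ω => Finset.prod_nonneg fun j _ => hq0 _, sum_prodM q hq1, ?_⟩
  intro k lam i
  classical
  set c : Fin n → Finset (Fin m) → ℝ := fun j S =>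
    (if (j : ℕ) < (k : ℕ) then (if S = lam j then q S else 0)
     else if j = k then ell i S * q S else q S) with hc
  set d : Fin n → Finset (Fin m) → ℝ := fun j S =>
    (if (j : ℕ) < (k : ℕ) then (if S = lam j then q S else 0) else q S) with hd
  have claimL : ∀ ω : Fin n → Finset (Fin m),
      (if ∀ j : Fin n, j < k → ω j = lam j then ell i (ω k) * prodM q ω else 0)
        = ∏ j, c j (ω j) := by
    intro ω
    by_cases hC : ∀ j : Fin n, j < k → ω j = lam j
    · rw [if_pos hC]
      have hck : c k (ω k) = ell i (ω k) * q (ω k) := by simp [hc]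
      have hrest : ∀ j ∈ Finset.univ.erase k, c j (ω j) = q (ω j) := by
        intro j hj
        have hjk : j ≠ k := (Finset.mem_erase.mp hj).1
        by_cases hlt : (j : ℕ) < (k : ℕ)
        · have hjlt : j < k := hlt
          simp [hc, hjlt, hC j hjlt]
        · have hjge : ¬ j < k := hlt
          simp [hc, hjge, hjk]
      calc ell i (ω k) * prodM q ω
          = ell i (ω k) * (q (ω k) * ∏ j ∈ Finset.univ.erase k, q (ω j)) := by
            rw [prodM_erase]
        _ = (ell i (ω k) * q (ω k)) * ∏ j ∈ Finset.univ.erase k, q (ω j) := by ring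
        _ = c k (ω k) * ∏ j ∈ Finset.univ.erase k, c j (ω j) := by
            rw [hck, Finset.prod_congr rfl hrest]
        _ = ∏ j, c j (ω j) :=
            Finset.mul_prod_erase Finset.univ (fun j => c j (ω j)) (Finset.mem_univ k)
    · rw [if_neg hC]
      push_neg at hC
      obtain ⟨j0, hj0lt, hj0ne⟩ := hC
      symm
      apply Finset.prod_eq_zero (Finset.mem_univ j0)
      simp [hc, hj0lt, hj0ne]
  have claimR : ∀ ω : Fin n → Finset (Fin m),
      (if ∀ j : Fin n, j < k → ω j = lam j then prodM q ω else 0)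
        = ∏ j, d j (ω j) := by
    intro ω
    by_cases hC : ∀ j : Fin n, j < k → ω j = lam j
    · rw [if_pos hC]
      have hdk : d k (ω k) = q (ω k) := by simp [hd]
      have hrest : ∀ j ∈ Finset.univ.erase k, d j (ω j) = q (ω j) := by
        intro j hj
        by_cases hlt : (j : ℕ) < (k : ℕ)
        · have hjlt : j < k := hlt
          simp [hd, hjlt, hC j hjlt]
        · have hjge : ¬ j < k := hlt
          simp [hd, hjge]
      calc prodM q ω
          = q (ω k) * ∏ j ∈ Finset.univ.erase k, q (ω j) := by rw [prodM_erase]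
        _ = d k (ω k) * ∏ j ∈ Finset.univ.erase k, d j (ω j) := by
            rw [hdk, Finset.prod_congr rfl hrest]
        _ = ∏ j, d j (ω j) :=
            Finset.mul_prod_erase Finset.univ (fun j => d j (ω j)) (Finset.mem_univ k)
    · rw [if_neg hC]
      push_neg at hC
      obtain ⟨j0, hj0lt, hj0ne⟩ := hC
      symm
      apply Finset.prod_eq_zero (Finset.mem_univ j0)
      simp [hd, hj0lt, hj0ne]
  have hck : ∑ S, c k S = b i := by
    have h1 : ∀ S : Finset (Fin m), c k S = ell i S * q S := fun S => by simp [hc]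
    rw [Finset.sum_congr rfl fun S _ => h1 S, hqm i]
  have hdk : ∑ S, d k S = 1 := by
    have h1 : ∀ S : Finset (Fin m), d k S = q S := fun S => by simp [hd]
    rw [Finset.sum_congr rfl fun S _ => h1 S, hq1]
  have hcd : ∀ j ∈ Finset.univ.erase k, (∑ S, c j S) = (∑ S, d j S) := by
    intro j hj
    have hjk : j ≠ k := (Finset.mem_erase.mp hj).1
    apply Finset.sum_congr rfl
    intro S _
    by_cases hlt : (j : ℕ) < (k : ℕ) <;> simp [hc, hd, hlt, hjk]
  calc ∑ ω, (if ∀ j : Fin n, j < k → ω j = lam j then ell i (ω k) * prodM q ω else 0)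
      = ∑ ω : Fin n → Finset (Fin m), ∏ j, c j (ω j) :=
        Finset.sum_congr rfl fun ω _ => claimL ω
    _ = ∏ j : Fin n, ∑ S, c j S := sum_prod_fn c
    _ = (∑ S, c k S) * ∏ j ∈ Finset.univ.erase k, ∑ S, c j S :=
        (Finset.mul_prod_erase Finset.univ (fun j => ∑ S, c j S) (Finset.mem_univ k)).symm
    _ = b i * ∏ j ∈ Finset.univ.erase k, ∑ S, d j S := by
        rw [hck, Finset.prod_congr rfl hcd]
    _ = b i * ((∑ S, d k S) * ∏ j ∈ Finset.univ.erase k, ∑ S, d j S) := by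
        rw [hdk, one_mul]
    _ = b i * ∏ j : Fin n, ∑ S, d j S := by
        rw [Finset.mul_prod_erase Finset.univ (fun j => ∑ S, d j S) (Finset.mem_univ k)]
    _ = b i * ∑ ω : Fin n → Finset (Fin m), ∏ j, d j (ω j) := by rw [sum_prod_fn d]
    _ = b i * ∑ ω, (if ∀ j : Fin n, j < k → ω j = lam j then prodM q ω else 0) := by
        rw [Finset.sum_congr rfl fun ω _ => (claimR ω).symm]

lemma main_ind (b : Fin m → ℝ) (hb0 : ∀ i, 0 ≤ b i) (hsum : ∑ i, b i ≤ 1) :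
    ∀ t : ℕ, t ≤ n → ∀ g : (Fin n → Finset (Fin m)) → ℝ, FibSupermod g → DepBelow t g →
      ∀ x, MemMn b x → ∑ ω, g ω * prodM (qLow b) ω ≤ ∑ ω, g ω * x ω := by
  intro t
  induction t with
  | zero =>
    intro _ g _ hdep x hx
    have hcst : ∀ ω, g ω = g (fun _ => ∅) :=
      fun ω => hdep ω _ fun j hj => absurd hj (Nat.not_lt_zero _)
    have e1 : ∑ ω, g ω * prodM (qLow b) ω = g (fun _ => ∅) := by
      rw [Finset.sum_congr rfl fun ω _ => by rw [hcst ω], ← Finset.mul_sum,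
        sum_prodM _ (qLow_sum_one b), mul_one]
    have e2 : ∑ ω, g ω * x ω = g (fun _ => ∅) := by
      rw [Finset.sum_congr rfl fun ω _ => by rw [hcst ω], ← Finset.mul_sum, hx.2.1, mul_one]
    rw [e1, e2]
  | succ t ih =>
    intro ht g hg hdep x hx
    have hkn : t < n := Nat.lt_of_succ_le ht
    have hdep' : DepBelow (((⟨t, hkn⟩ : Fin n) : ℕ) + 1) g := hdep
    have h1 := Tk_prod (qLow b) (qLow_sum_one b) (⟨t, hkn⟩ : Fin n) g
    have h2 := ih (Nat.le_of_succ_le ht) (Tk (qLow b) (⟨t, hkn⟩ : Fin n) g)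
      (Tk_fibsup (qLow b) (qLow_nonneg b hb0 hsum) _ g hg)
      (Tk_dep (qLow b) _ g hdep') x hx
    have h3 := onestep b hb0 hsum x hx (⟨t, hkn⟩ : Fin n) g hg hdep'
    linarith

end MSMAux

/-- multi-step minimization: if moreover `Σ b_i ≤ 1`, the expectation of a
fibrewise supermodular `f` over `M_n(b)` is minimized at the product measure `(q_*)^{⊗n}`. -/
theorem multi_step_min {m n : ℕ} (hm : 0 < m) (hn : 0 < n) (b : Fin m → ℝ)
    (hmono : ∀ i j : Fin m, i ≤ j → b j ≤ b i)
    (hb1 : ∀ i, b i ≤ 1) (hb0 : ∀ i, 0 ≤ b i)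
    (hsum : ∑ i, b i ≤ 1)
    (f : (Fin n → Finset (Fin m)) → ℝ) (hf : FibSupermod f) :
    (∀ x, MemMn b x → ∑ ω, f ω * prodM (qLow b) ω ≤ ∑ ω, f ω * x ω) ∧
    IsLeast {r : ℝ | ∃ x, MemMn b x ∧ r = ∑ ω, f ω * x ω}
      (∑ ω, f ω * prodM (qLow b) ω) := by
  have hq0 := MSMAux.qLow_nonneg b hb0 hsum
  have hmem : MemMn (n := n) b (prodM (qLow b)) :=
    MSMAux.prodM_memMn (n := n) b (qLow b) hq0 (MSMAux.qLow_sum_one b) (MSMAux.qLow_mom b)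
  have hdepn : MSMAux.DepBelow n f := fun ω ω' h => congrArg f (funext fun j => h j j.isLt)
  have part1 : ∀ x, MemMn b x → ∑ ω, f ω * prodM (qLow b) ω ≤ ∑ ω, f ω * x ω :=
    fun x hx => MSMAux.main_ind b hb0 hsum n le_rfl f hf hdepn x hx
  refine ⟨part1, ⟨⟨prodM (qLow b), hmem, rfl⟩, ?_⟩⟩
  rintro r ⟨x, hx, rfl⟩
  exact part1 x hx
end
end

section
/- (Grafting/optimality-at-every-node proposition.) Let b = (b_1,…,b_m) with 0 ≤ b_i ≤ 1 and let X : 𝓛^n → ℝ. Suppose P* ∈ M_n(b) attains the maximum of E_P(X) over P ∈ M_n(b). For a prefix λ = (λ_1,…,λ_k) ∈ 𝓛^k (0 ≤ k < n) let cyl(λ) = {ω ∈ 𝓛^n : ω_j = λ_j for 1 ≤ j ≤ k} and for a probability function z on 𝓛^n write z(cyl(λ)) = Σ_{ω∈cyl(λ)} z(ω). Then for every prefix λ with P*(cyl(λ)) > 0 and every Q ∈ M_n(b) with Q(cyl(λ)) > 0: (1/P*(cyl(λ))) Σ_{ω∈cyl(λ)} X(ω)P*(ω) ≥ (1/Q(cyl(λ)))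 Σ_{ω∈cyl(λ)} X(ω)Q(ω). In other words, the measure maximizing the expectation at the root also maximizes the conditional expectation of X at every node of the tree. -/
noncomputable section

open Finset

section helpers
variable {α : Type*} [Fintype α]

lemma sum_ite_congr' (p q : α → Prop) [DecidablePred p] [DecidablePred q]
    (h : ∀ x, p x ↔ q x) (f : α → ℝ) :
    (∑ x, if p x then f x else 0) = ∑ x, if q x then f x else 0 :=
  Finset.sum_congr rfl fun x _ => if_congr (h x) rfl rfl

lemma expand_R (B c : α → Prop) [DecidablePred B] [DecidablePred c]
    (f q p : α → ℝ) (s : ℝ) :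
    (∑ x, if B x then f x * (if c x then s * q x else p x) else 0)
      = s * (∑ x, if B x ∧ c x then f x * q x else 0)
        + ∑ x, if B x ∧ ¬ c x then f x * p x else 0 := by
  rw [Finset.mul_sum, ← Finset.sum_add_distrib]
  refine Finset.sum_congr rfl fun x _ => ?_
  by_cases hB : B x <;> by_cases hc : c x <;> simp [hB, hc] <;> ring

lemma expand_R1 (B c : α → Prop) [DecidablePred B] [DecidablePred c]
    (q p : α → ℝ) (s : ℝ) :
    (∑ x, if B x then (if c x then s * q x else p x) else 0)
      = s * (∑ x, if B x ∧ c x then q x else 0)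
        + ∑ x, if B x ∧ ¬ c x then p x else 0 := by
  rw [Finset.mul_sum, ← Finset.sum_add_distrib]
  refine Finset.sum_congr rfl fun x _ => ?_
  by_cases hB : B x <;> by_cases hc : c x <;> simp [hB, hc]

lemma sum_split (B c : α → Prop) [DecidablePred B] [DecidablePred c] (g : α → ℝ) :
    (∑ x, if B x then g x else 0)
      = (∑ x, if B x ∧ c x then g x else 0) + ∑ x, if B x ∧ ¬ c x then g x else 0 := by
  rw [← Finset.sum_add_distrib]
  refine Finset.sum_congr rfl fun x _ => ?_
  by_cases hB : B x <;> by_cases hc : c x <;> simp [hB, hc]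

end helpers

lemma graft_mem {m n : ℕ} (b : Fin m → ℝ) (P Q : (Fin n → Finset (Fin m)) → ℝ)
    (hP : MemMn b P) (hQ : MemMn b Q) (k : ℕ) (lam : Fin n → Finset (Fin m))
    (s : ℝ) (hs0 : 0 ≤ s)
    (hs : s * (∑ ω, if ∀ j : Fin n, (j : ℕ) < k → ω j = lam j then Q ω else 0)
         = ∑ ω, if ∀ j : Fin n, (j : ℕ) < k → ω j = lam j then P ω else 0) :
    MemMn b (fun ω => if ∀ j : Fin n, (j : ℕ) < k → ω j = lam j then s * Q ω else P ω) := by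
  obtain ⟨hP0, hP1, hPcond⟩ := hP
  obtain ⟨hQ0, hQ1, hQcond⟩ := hQ
  refine ⟨?_, ?_, ?_⟩
  · intro ω; dsimp only
    split
    · exact mul_nonneg hs0 (hQ0 ω)
    · exact hP0 ω
  · -- sum = 1
    have key : ∀ ω : Fin n → Finset (Fin m),
        (if ∀ j : Fin n, (j : ℕ) < k → ω j = lam j then s * Q ω else P ω)
          = ((if ∀ j : Fin n, (j : ℕ) < k → ω j = lam j then s * Q ω else 0)
             - (if ∀ j : Fin n, (j : ℕ) < k → ω j = lam j then P ω else 0)) + P ω := by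
      intro ω
      by_cases h : ∀ j : Fin n, (j : ℕ) < k → ω j = lam j
      · simp only [if_pos h]; ring
      · simp [h]
    calc (∑ ω, if ∀ j : Fin n, (j : ℕ) < k → ω j = lam j then s * Q ω else P ω)
        = ∑ ω, (((if ∀ j : Fin n, (j : ℕ) < k → ω j = lam j then s * Q ω else 0)
             - (if ∀ j : Fin n, (j : ℕ) < k → ω j = lam j then P ω else 0)) + P ω) :=
          Finset.sum_congr rfl fun ω _ => key ω
      _ = ((∑ ω, if ∀ j : Fin n, (j : ℕ) < k → ω j = lam j then s * Q ω else 0)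
             - (∑ ω, if ∀ j : Fin n, (j : ℕ) < k → ω j = lam j then P ω else 0)) + ∑ ω, P ω := by
          rw [Finset.sum_add_distrib, Finset.sum_sub_distrib]
      _ = 1 := by
          have : (∑ ω, if ∀ j : Fin n, (j : ℕ) < k → ω j = lam j then s * Q ω else 0)
              = s * ∑ ω, if ∀ j : Fin n, (j : ℕ) < k → ω j = lam j then Q ω else 0 := by
            rw [Finset.mul_sum]
            refine Finset.sum_congr rfl fun ω _ => ?_
            by_cases h : ∀ j : Fin n, (j : ℕ) < k → ω j = lam j <;> simp [h]
          rw [this, hs, hP1]; ring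
  · intro k' lam' i
    dsimp only
    rw [expand_R, expand_R1]
    by_cases hag : ∀ j : Fin n, (j : ℕ) < min k (k' : ℕ) → lam j = lam' j
    · by_cases hkk' : k ≤ (k' : ℕ)
      · -- B → c : the grafted cylinder contains the whole B-cylinder
        have hBc : ∀ ω : Fin n → Finset (Fin m),
            (∀ j : Fin n, j < k' → ω j = lam' j) → (∀ j : Fin n, (j : ℕ) < k → ω j = lam j) := by
          intro ω hB j hj
          have hj' : j < k' := by
            rw [Fin.lt_def]; exact lt_of_lt_of_le hj hkk'
          have := hB j hj'
          rw [this]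
          exact (hag j (lt_min hj (lt_of_lt_of_le hj hkk'))).symm
        rw [sum_ite_congr' (fun ω => (∀ j : Fin n, j < k' → ω j = lam' j)
              ∧ ∀ j : Fin n, (j : ℕ) < k → ω j = lam j)
              (fun ω => ∀ j : Fin n, j < k' → ω j = lam' j)
              (fun ω => ⟨fun h => h.1, fun h => ⟨h, hBc ω h⟩⟩),
            sum_ite_congr' (fun ω => (∀ j : Fin n, j < k' → ω j = lam' j)
              ∧ ∀ j : Fin n, (j : ℕ) < k → ω j = lam j)
              (fun ω => ∀ j : Fin n, j < k' → ω j = lam' j)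
              (fun ω => ⟨fun h => h.1, fun h => ⟨h, hBc ω h⟩⟩)]
        have hempty : ∀ ω : Fin n → Finset (Fin m), ¬ ((∀ j : Fin n, j < k' → ω j = lam' j)
              ∧ ¬ ∀ j : Fin n, (j : ℕ) < k → ω j = lam j) := by
          intro ω ⟨h1, h2⟩; exact h2 (hBc ω h1)
        rw [sum_ite_congr' _ (fun _ => False) (fun ω => ⟨fun h => hempty ω h, False.elim⟩),
            sum_ite_congr' _ (fun _ => False) (fun ω => ⟨fun h => hempty ω h, False.elim⟩)]
        simp only [if_false, Finset.sum_const_zero, add_zero]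
        rw [hQcond k' lam' i]; ring
      · -- k' < k : c → B
        push_neg at hkk'
        have hcB : ∀ ω : Fin n → Finset (Fin m),
            (∀ j : Fin n, (j : ℕ) < k → ω j = lam j) → (∀ j : Fin n, j < k' → ω j = lam' j) := by
          intro ω hc j hj
          rw [Fin.lt_def] at hj
          rw [hc j (lt_trans hj hkk')]
          exact hag j (lt_min (lt_trans hj hkk') hj)
        have hiff : ∀ ω : Fin n → Finset (Fin m),
            ((∀ j : Fin n, j < k' → ω j = lam' j) ∧ (∀ j : Fin n, (j : ℕ) < k → ω j = lam j))
              ↔ (∀ j : Fin n, (j : ℕ) < k → ω j = lam j) :=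
          fun ω => ⟨fun h => h.2, fun h => ⟨hcB ω h, h⟩⟩
        rw [sum_ite_congr' _ _ hiff, sum_ite_congr' _ _ hiff]
        -- on c, ω k' = lam k'
        have hC : (∑ ω, if ∀ j : Fin n, (j : ℕ) < k → ω j = lam j then ell i (ω k') * Q ω else 0)
            = ell i (lam k') * ∑ ω, if ∀ j : Fin n, (j : ℕ) < k → ω j = lam j then Q ω else 0 := by
          rw [Finset.mul_sum]
          refine Finset.sum_congr rfl fun ω _ => ?_
          by_cases h : ∀ j : Fin n, (j : ℕ) < k → ω j = lam j
          · rw [if_pos h, if_pos h, h k' hkk']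
          · simp [h]
        have hCP : (∑ ω, if ∀ j : Fin n, (j : ℕ) < k → ω j = lam j then ell i (ω k') * P ω else 0)
            = ell i (lam k') * ∑ ω, if ∀ j : Fin n, (j : ℕ) < k → ω j = lam j then P ω else 0 := by
          rw [Finset.mul_sum]
          refine Finset.sum_congr rfl fun ω _ => ?_
          by_cases h : ∀ j : Fin n, (j : ℕ) < k → ω j = lam j
          · rw [if_pos h, if_pos h, h k' hkk']
          · simp [h]
        rw [hC]
        -- rebuild sums for P
        have hsplit1 := sum_split (fun ω => ∀ j : Fin n, j < k' → ω j = lam' j)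
          (fun ω => ∀ j : Fin n, (j : ℕ) < k → ω j = lam j)
          (fun ω => ell i (ω k') * P ω)
        have hsplit2 := sum_split (fun ω => ∀ j : Fin n, j < k' → ω j = lam' j)
          (fun ω => ∀ j : Fin n, (j : ℕ) < k → ω j = lam j) P
        rw [sum_ite_congr' _ _ hiff] at hsplit1 hsplit2
        have e1 : s * (ell i (lam k') *
              ∑ ω, if ∀ j : Fin n, (j : ℕ) < k → ω j = lam j then Q ω else 0)
            = ∑ ω, if ∀ j : Fin n, (j : ℕ) < k → ω j = lam j then ell i (ω k') * P ω else 0 := by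
          rw [hCP, mul_left_comm, hs]
        have e2 : s * (∑ ω, if ∀ j : Fin n, (j : ℕ) < k → ω j = lam j then Q ω else 0)
            = ∑ ω, if ∀ j : Fin n, (j : ℕ) < k → ω j = lam j then P ω else 0 := hs
        rw [e1, e2, ← hsplit1, ← hsplit2]
        exact hPcond k' lam' i
    · -- prefixes incompatible: B ∩ c = ∅
      push_neg at hag
      obtain ⟨j0, hj0, hne⟩ := hag
      have hempty : ∀ ω : Fin n → Finset (Fin m), (∀ j : Fin n, j < k' → ω j = lam' j)
            → ¬ ∀ j : Fin n, (j : ℕ) < k → ω j = lam j := by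
        intro ω hB hc
        have h1 : ω j0 = lam' j0 := hB j0 (by rw [Fin.lt_def]; exact lt_of_lt_of_le hj0 (min_le_right _ _))
        have h2 : ω j0 = lam j0 := hc j0 (lt_of_lt_of_le hj0 (min_le_left _ _))
        exact hne (h2 ▸ h1)
      have hiff : ∀ ω : Fin n → Finset (Fin m),
          ((∀ j : Fin n, j < k' → ω j = lam' j) ∧ ¬ ∀ j : Fin n, (j : ℕ) < k → ω j = lam j)
            ↔ (∀ j : Fin n, j < k' → ω j = lam' j) :=
        fun ω => ⟨fun h => h.1, fun h => ⟨h, hempty ω h⟩⟩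
      have hiff0 : ∀ ω : Fin n → Finset (Fin m),
          ((∀ j : Fin n, j < k' → ω j = lam' j) ∧ ∀ j : Fin n, (j : ℕ) < k → ω j = lam j)
            ↔ False :=
        fun ω => ⟨fun h => hempty ω h.1 h.2, False.elim⟩
      rw [sum_ite_congr' _ _ (hiff0), sum_ite_congr' _ _ hiff0,
          sum_ite_congr' _ _ hiff, sum_ite_congr' _ _ hiff]
      simp only [if_false, Finset.sum_const_zero, mul_zero, zero_add]
      exact hPcond k' lam' i


lemma graft_key {m n : ℕ} (b : Fin m → ℝ)
    (X : (Fin n → Finset (Fin m)) → ℝ)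
    (P : (Fin n → Finset (Fin m)) → ℝ) (hP : MemMn b P)
    (hmax : ∀ Q, MemMn b Q → ∑ ω, X ω * Q ω ≤ ∑ ω, X ω * P ω)
    (k : ℕ) (lam : Fin n → Finset (Fin m))
    (hPc : 0 < ∑ ω, if ∀ j : Fin n, (j : ℕ) < k → ω j = lam j then P ω else 0)
    (Q : (Fin n → Finset (Fin m)) → ℝ) (hQ : MemMn b Q)
    (hQc : 0 < ∑ ω, if ∀ j : Fin n, (j : ℕ) < k → ω j = lam j then Q ω else 0) :
    ((∑ ω, if ∀ j : Fin n, (j : ℕ) < k → ω j = lam j then P ω else 0) /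
      (∑ ω, if ∀ j : Fin n, (j : ℕ) < k → ω j = lam j then Q ω else 0)) *
      (∑ ω, if ∀ j : Fin n, (j : ℕ) < k → ω j = lam j then X ω * Q ω else 0) ≤
      ∑ ω, if ∀ j : Fin n, (j : ℕ) < k → ω j = lam j then X ω * P ω else 0 := by
  set s : ℝ := (∑ ω, if ∀ j : Fin n, (j : ℕ) < k → ω j = lam j then P ω else 0) /
      (∑ ω, if ∀ j : Fin n, (j : ℕ) < k → ω j = lam j then Q ω else 0) with hsdef
  have hs : s * (∑ ω, if ∀ j : Fin n, (j : ℕ) < k → ω j = lam j then Q ω else 0)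
      = ∑ ω, if ∀ j : Fin n, (j : ℕ) < k → ω j = lam j then P ω else 0 :=
    div_mul_cancel₀ _ (ne_of_gt hQc)
  have hs0 : 0 ≤ s := div_nonneg hPc.le hQc.le
  have hR := graft_mem b P Q hP hQ k lam s hs0 hs
  have h := hmax _ hR
  have hsum : (∑ ω, X ω * (if ∀ j : Fin n, (j : ℕ) < k → ω j = lam j then s * Q ω else P ω))
      = s * (∑ ω, if ∀ j : Fin n, (j : ℕ) < k → ω j = lam j then X ω * Q ω else 0)
        - (∑ ω, if ∀ j : Fin n, (j : ℕ) < k → ω j = lam j then X ω * P ω else 0)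
        + ∑ ω, X ω * P ω := by
    rw [Finset.mul_sum, ← Finset.sum_sub_distrib, ← Finset.sum_add_distrib]
    refine Finset.sum_congr rfl fun ω _ => ?_
    by_cases hc : ∀ j : Fin n, (j : ℕ) < k → ω j = lam j
    · simp only [if_pos hc]; ring
    · simp [hc]
  rw [hsum] at h
  linarith

/-- grafting: a measure in `M_n(b)` attaining the maximal expectation of `X`
at the root also maximizes the conditional expectation of `X` at every node. -/
theorem grafting {m n : ℕ} (hm : 0 < m) (hn : 0 < n) (b : Fin m → ℝ)
    (hb0 : ∀ i, 0 ≤ b i) (hb1 : ∀ i, b i ≤ 1)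
    (X : (Fin n → Finset (Fin m)) → ℝ)
    (P : (Fin n → Finset (Fin m)) → ℝ) (hP : MemMn b P)
    (hmax : ∀ Q, MemMn b Q → ∑ ω, X ω * Q ω ≤ ∑ ω, X ω * P ω)
    (k : ℕ) (hk : k < n) (lam : Fin n → Finset (Fin m))
    (hPc : 0 < ∑ ω, if ∀ j : Fin n, (j : ℕ) < k → ω j = lam j then P ω else 0)
    (Q : (Fin n → Finset (Fin m)) → ℝ) (hQ : MemMn b Q)
    (hQc : 0 < ∑ ω, if ∀ j : Fin n, (j : ℕ) < k → ω j = lam j then Q ω else 0) :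
    (∑ ω, if ∀ j : Fin n, (j : ℕ) < k → ω j = lam j then X ω * Q ω else 0) /
      (∑ ω, if ∀ j : Fin n, (j : ℕ) < k → ω j = lam j then Q ω else 0) ≤
    (∑ ω, if ∀ j : Fin n, (j : ℕ) < k → ω j = lam j then X ω * P ω else 0) /
      (∑ ω, if ∀ j : Fin n, (j : ℕ) < k → ω j = lam j then P ω else 0) := by
  have key := graft_key b X P hP hmax k lam hPc Q hQ hQc
  rw [div_le_div_iff₀ hQc hPc]
  calc (∑ ω, if ∀ j : Fin n, (j : ℕ) < k → ω j = lam j then X ω * Q ω else 0) *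
        (∑ ω, if ∀ j : Fin n, (j : ℕ) < k → ω j = lam j then P ω else 0)
      = ((∑ ω, if ∀ j : Fin n, (j : ℕ) < k → ω j = lam j then P ω else 0) /
          (∑ ω, if ∀ j : Fin n, (j : ℕ) < k → ω j = lam j then Q ω else 0) *
          (∑ ω, if ∀ j : Fin n, (j : ℕ) < k → ω j = lam j then X ω * Q ω else 0)) *
          (∑ ω, if ∀ j : Fin n, (j : ℕ) < k → ω j = lam j then Q ω else 0) := by
        field_simp
    _ ≤ (∑ ω, if ∀ j : Fin n, (j : ℕ) < k → ω j = lam j then X ω * P ω else 0) *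
          (∑ ω, if ∀ j : Fin n, (j : ℕ) < k → ω j = lam j then Q ω else 0) :=
        mul_le_mul_of_nonneg_right key hQc.le
end
end
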